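/- arXiv:1109.5801 — 6 statements merged into one kernel-verified Lean document; each statement's English description precedes it below -/
import Mathlib

section
/- Let A be a finite nonempty alphabet and let x : ℕ → A be a sequence. For n ≥ 1 let p_x(n) denote the number of distinct factors of length n of x, i.e. the number of distinct words (x(i), x(i+1), …, x(i+n−1)) for i ∈ ℕ. Then the following are equivalent: (1) x is ultimately periodic, i.e. there exist N ∈ ℕ and p ≥ 1 such that x(m+p) = x(m) for all m ≥ N; (2) there exists n ≥ 1 such that p_x(n) ≤ n; (3) there exist n₀ ∈ ℕ and C ∈ ℕ such that p_x(n) ≤ C for all n ≥ n₀. -/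
/-!
If `p(k + 1) ≤ p(k)` for some `k`, then restriction to the first `k` letters, which maps the factors
of length `k + 1` onto those of length `k`, is injective on them: every factor of length `k` has a
unique extension to the right. Two occurrences of the same factor of length `k` therefore continue
identically forever, and by pigeonhole some factor of length `k` occurs twice, so `x` is ultimately
periodic. Such a `k` exists once `p(n) ≤ n`, for otherwise `p(n) ≥ p(0) + n = n + 1`.
Conversely, with preperiod `N` and period `p` every factor already occurs at a position
below `N + p`.
-/

open Classical

noncomputable section

/-- `p_x(n)`: the number of distinct factors of length `n` of the sequence `x`. -/
def factorCount {A : Type} (x : ℕ → A) (n : ℕ) : ℕ :=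
  Set.ncard {w : Fin n → A | ∃ i : ℕ, ∀ j : Fin n, w j = x (i + j)}

section Factor

variable {A : Type} (x : ℕ → A)

def factor (n i : ℕ) : Fin n → A := fun j => x (i + j)

theorem factorCount_eq_ncard_range (n : ℕ) : factorCount x n = (Set.range (factor x n)).ncard := by
  rw [factorCount]
  congr 1
  ext w
  exact exists_congr fun i => ⟨fun h => funext fun j => (h j).symm, fun h j => by rw [← h]; rfl⟩

theorem init_factor (n i : ℕ) : Fin.init (factor x (n + 1) i) = factor x n i := rfl

theorem tail_factor (n i : ℕ) : Fin.tail (factor x (n + 1) i) = factor x n (i + 1) := by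
  funext j
  simp only [Fin.tail, factor, Fin.val_succ, Nat.add_right_comm, Nat.add_assoc]

theorem range_factor_eq_image_init (n : ℕ) :
    Set.range (factor x n) = Fin.init '' Set.range (factor x (n + 1)) := by
  rw [← Set.range_comp]
  rfl

theorem factorCount_zero : factorCount x 0 = 1 := by
  rw [factorCount_eq_ncard_range, Set.ncard_eq_one]
  exact ⟨factor x 0 0,
    Set.eq_singleton_iff_unique_mem.2 ⟨⟨0, rfl⟩, fun _ _ => Subsingleton.elim _ _⟩⟩

theorem exists_factorCount_succ_le {n : ℕ} (h : factorCount x n ≤ n) :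
    ∃ k, factorCount x (k + 1) ≤ factorCount x k := by
  by_contra! hlt
  have := (strictMono_nat_of_lt_succ hlt).add_le_nat n 0
  rw [Nat.add_zero, factorCount_zero] at this
  omega

theorem factorCount_le_of_eventually_periodic {N p : ℕ} (hp : 0 < p)
    (hper : ∀ m, N ≤ m → x (m + p) = x m) (n : ℕ) : factorCount x n ≤ N + p := by
  have hfac : Function.Periodic (fun m => factor x n (N + m)) p := fun m => by
    funext j
    simp only [factor]
    rw [show N + (m + p) + j = N + m + j + p by omega, hper _ (by omega)]
  have hsub : Set.range (factor x n) ⊆ factor x n '' Set.Iio (N + p) := by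
    rintro _ ⟨i, rfl⟩
    obtain hi | ⟨m, rfl⟩ := (lt_or_ge i N).imp_right Nat.exists_eq_add_of_le
    · exact ⟨i, Set.mem_Iio.2 (by omega), rfl⟩
    · exact ⟨N + m % p, Set.mem_Iio.2 (Nat.add_lt_add_left (Nat.mod_lt m hp) N), hfac.map_mod_nat m⟩
  calc factorCount x n = (Set.range (factor x n)).ncard := factorCount_eq_ncard_range x n
    _ ≤ (factor x n '' Set.Iio (N + p)).ncard := Set.ncard_le_ncard hsub (Set.toFinite _)
    _ ≤ N + p := (Set.ncard_image_le (Set.finite_Iio _)).trans_eq (Set.ncard_Iio_nat _)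

variable [Finite A]

theorem factorCount_le_factorCount_succ (n : ℕ) : factorCount x n ≤ factorCount x (n + 1) := by
  rw [factorCount_eq_ncard_range, factorCount_eq_ncard_range, range_factor_eq_image_init]
  exact Set.ncard_image_le (Set.toFinite _)

theorem factor_succ_eq_of_factor_eq {k : ℕ} (hk : factorCount x (k + 1) ≤ factorCount x k)
    {i j : ℕ} (h : factor x k i = factor x k j) : factor x (k + 1) i = factor x (k + 1) j := by
  have hcard :
      (Fin.init '' Set.range (factor x (k + 1))).ncard = (Set.range (factor x (k + 1))).ncard := by
    rw [← range_factor_eq_image_init, ← factorCount_eq_ncard_range, ← factorCount_eq_ncard_range]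
    exact le_antisymm (factorCount_le_factorCount_succ x k) hk
  refine Set.injOn_of_ncard_image_eq hcard (Set.toFinite _) ⟨i, rfl⟩ ⟨j, rfl⟩ ?_
  simpa only [init_factor] using h

theorem factor_add_eq_of_factor_eq {k : ℕ} (hk : factorCount x (k + 1) ≤ factorCount x k)
    {i j : ℕ} (h : factor x k i = factor x k j) (t : ℕ) :
    factor x k (i + t) = factor x k (j + t) := by
  induction t with
  | zero => exact h
  | succ t ih =>
    rw [← Nat.add_assoc, ← Nat.add_assoc, ← tail_factor, ← tail_factor,
      factor_succ_eq_of_factor_eq x hk ih]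

theorem exists_eventually_periodic_of_factorCount_succ_le {k : ℕ}
    (hk : factorCount x (k + 1) ≤ factorCount x k) :
    ∃ N p, 1 ≤ p ∧ ∀ m, N ≤ m → x (m + p) = x m := by
  obtain ⟨a, b, hab, h⟩ :=
    Set.finite_univ.exists_lt_map_eq_of_forall_mem (f := factor x k) (fun _ => Set.mem_univ _)
  refine ⟨a, b - a, by omega, fun m hm => ?_⟩
  have := congrFun (factor_succ_eq_of_factor_eq x hk (factor_add_eq_of_factor_eq x hk h (m - a))) 0
  simp only [factor, Fin.val_zero, Nat.add_zero] at this
  rw [show m + (b - a) = b + (m - a) by omega, ← this, Nat.add_sub_cancel' hm]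

end Factor

theorem morse_hedlund_general {A : Type} [Fintype A] (x : ℕ → A) :
    List.TFAE
      [ ∃ (N p : ℕ), 1 ≤ p ∧ ∀ m : ℕ, N ≤ m → x (m + p) = x m,
        ∃ n : ℕ, 1 ≤ n ∧ factorCount x n ≤ n,
        ∃ (n₀ C : ℕ), ∀ n : ℕ, n₀ ≤ n → factorCount x n ≤ C ] := by
  tfae_have 1 → 3 := fun ⟨N, p, hp, hper⟩ =>
    ⟨0, N + p, fun n _ => factorCount_le_of_eventually_periodic x hp hper n⟩
  tfae_have 3 → 2 := fun ⟨n₀, C, hC⟩ =>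
    ⟨max n₀ (max C 1), by omega, (hC _ (le_max_left _ _)).trans (by omega)⟩
  tfae_have 2 → 1 := by
    rintro ⟨n, -, hn⟩
    obtain ⟨k, hk⟩ := exists_factorCount_succ_le x hn
    exact exists_eventually_periodic_of_factorCount_succ_le x hk
  tfae_finish

/-- Morse–Hedlund theorem. -/
theorem morse_hedlund {A : Type} [Fintype A] [Nonempty A] (x : ℕ → A) :
    List.TFAE
      [ ∃ (N p : ℕ), 1 ≤ p ∧ ∀ m : ℕ, N ≤ m → x (m + p) = x m,
        ∃ n : ℕ, 1 ≤ n ∧ factorCount x n ≤ n,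
        ∃ (n₀ C : ℕ), ∀ n : ℕ, n₀ ≤ n → factorCount x n ≤ C ] :=
  morse_hedlund_general x

end
end

section
/- Let d ≥ 1 and let X ⊆ ℤ^d be semilinear. Then there exists C > 0 such that R_X(n) ≤ C·n^{d−1} for all n ≥ 1. -/
open Classical

noncomputable section

/-- Sup norm of an integer vector. -/
def supNorm {ι : Type} [Fintype ι] (x : ι → ℤ) : ℕ :=
  Finset.univ.sup fun i => (x i).natAbs

/-- The block of size `n` of `M` at `x`. -/
def blockOf {ι : Type} [Fintype ι] (M : Set (ι → ℤ)) (x : ι → ℤ) (n : ℕ) :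
    (ι → Fin n) → Prop :=
  fun w => (fun i => x i + (w i : ℤ)) ∈ M

/-- A block is recurrent if it occurs at points of arbitrarily large norm. -/
def IsRecurrentBlock {ι : Type} [Fintype ι] (M : Set (ι → ℤ)) (n : ℕ)
    (B : (ι → Fin n) → Prop) : Prop :=
  ∀ L : ℕ, ∃ x : ι → ℤ, L ≤ supNorm x ∧ blockOf M x n = B

/-- `R_M(n)`: number of distinct recurrent blocks of size `n`. -/
def recBlockCount {ι : Type} [Fintype ι] (M : Set (ι → ℤ)) (n : ℕ) : ℕ :=
  Set.ncard {B : (ι → Fin n) → Prop | IsRecurrentBlock M n B}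

/-- `p_M(n)`: number of distinct blocks of size `n`. -/
def blockCount {ι : Type} [Fintype ι] (M : Set (ι → ℤ)) (n : ℕ) : ℕ :=
  Set.ncard {B : (ι → Fin n) → Prop | ∃ x, blockOf M x n = B}

/-- Linear subset of `ℤ^ι`. -/
def IsLinearSetZd {ι : Type} [Fintype ι] (S : Set (ι → ℤ)) : Prop :=
  ∃ (x : ι → ℤ) (V : Finset (ι → ℤ)),
    S = {y | ∃ c : (ι → ℤ) → ℕ, y = x + ∑ v ∈ V, (c v : ℤ) • v}

/-- Semilinear = finite union of linear sets. -/
def IsSemilinearSetZd {ι : Type} [Fintype ι] (S : Set (ι → ℤ)) : Prop :=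
  ∃ F : Finset (Set (ι → ℤ)), (∀ T ∈ F, IsLinearSetZd T) ∧ S = ⋃ T ∈ F, T

/-- Section `M_{i,c}` of a subset of `ℤ^(d+1)`. -/
def sectionSet {d : ℕ} (M : Set (Fin (d + 1) → ℤ)) (i : Fin (d + 1)) (c : ℤ) :
    Set (Fin d → ℤ) :=
  {y | i.insertNth c y ∈ M}

/-- Open ball (for the sup norm) of radius `K` centered at `x`. -/
def ball {ι : Type} [Fintype ι] (x : ι → ℤ) (K : ℕ) : Set (ι → ℤ) :=
  {y | supNorm (x - y) < K}

/-- `M` is `v`-periodic inside `X`. -/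
def vPeriodicInside {ι : Type} [Fintype ι] (M : Set (ι → ℤ)) (v : ι → ℤ)
    (X : Set (ι → ℤ)) : Prop :=
  ∀ m : ι → ℤ, m ∈ X → m + v ∈ X → (m ∈ M ↔ m + v ∈ M)

/-- Border of `A` in direction `v`. -/
def border {ι : Type} (A : Set (ι → ℤ)) (v : ι → ℤ) : Set (ι → ℤ) :=
  {x | x ∈ A ∧ x + v ∉ A}

/-- `(d-k)`-dimensional section of `M ⊆ ℤ^d` obtained by fixing the coordinates
in the range of `g` to the corresponding constants `c`. -/
def multiSection {d k : ℕ} (M : Set (Fin d → ℤ)) (g : Fin k → Fin d)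
    (c : Fin k → ℤ) : Set ({j : Fin d // ∀ m, g m ≠ j} → ℤ) :=
  {y | (fun j : Fin d =>
    if h : ∃ m, g m = j then c (Classical.choose h)
    else y ⟨j, fun m hm => h ⟨m, hm⟩⟩) ∈ M}

/-- Repetitivity of a subset of `ℤ^ι`. -/
def Repetitive {ι : Type} [Fintype ι] (M : Set (ι → ℤ)) : Prop :=
  ∀ n : ℕ, 1 ≤ n → ∃ R : ℕ, ∀ x y : ι → ℤ, ∃ z : ι → ℤ,
    supNorm (z - y) ≤ R ∧ blockOf M z n = blockOf M x n

/-- Ideal crystal: `d` linearly independent translation periods. -/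
def IsIdealCrystal {d : ℕ} (M : Set (Fin d → ℤ)) : Prop :=
  ∃ p : Fin d → (Fin d → ℤ), LinearIndependent ℤ p ∧
    ∀ i, (fun x => x + p i) '' M = M

/-!
A semilinear set is a Boolean combination of halfspaces `{y | c ≤ a ⬝ᵥ y}` and congruence
classes modulo some `m` (Presburger quantifier elimination, done one generator `x + ℕ v` at a
time with Cooper's bound on the least witness). For such a set the block of size `n` at `x` is
determined by the signature of `x`: `x mod m` together with, for each halfspace, the offset
`c - a ⬝ᵥ x` if it lies in a window `[-K n, K n]` and the side of the window it lies on
otherwise. There are finitely many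
signatures, so every recurrent block has a recurrent signature. Two distinct points carry any
recurrent signature, so the forms `a` whose offsets fall in the window vanish on a nonzero
vector: their values range over a lattice of rank at most `d` in a box of side `O(n)`, which
leaves `O(n ^ d)` recurrent signatures.
-/

variable {ι : Type} [Fintype ι]

def halfspace (h : (ι → ℤ) × ℤ) : Set (ι → ℤ) := {y | h.2 ≤ h.1 ⬝ᵥ y}

def IsHalfspaceCongruenceSet (X : Set (ι → ℤ)) : Prop :=
  ∃ (P : Finset ((ι → ℤ) × ℤ)) (m : ℕ), 0 < m ∧ ∀ y z : ι → ℤ,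
    (∀ p ∈ P, (y ∈ halfspace p ↔ z ∈ halfspace p)) → (∀ i, y i ≡ z i [ZMOD m]) → y ∈ X → z ∈ X

namespace IsHalfspaceCongruenceSet

lemma empty : IsHalfspaceCongruenceSet (∅ : Set (ι → ℤ)) :=
  ⟨∅, 1, one_pos, fun _ _ _ _ h => h.elim⟩

lemma singleton (x : ι → ℤ) : IsHalfspaceCongruenceSet {x} := by
  refine ⟨Finset.univ.image (fun i => (Pi.single i 1, x i)) ∪
    Finset.univ.image (fun i => (-Pi.single i 1, -x i)), 1, one_pos, ?_⟩
  rintro y z h - rfl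
  funext i
  have h₁ := h (Pi.single i 1, y i)
    (Finset.mem_union_left _ (Finset.mem_image_of_mem _ (Finset.mem_univ i)))
  have h₂ := h (-Pi.single i 1, -y i)
    (Finset.mem_union_right _ (Finset.mem_image_of_mem _ (Finset.mem_univ i)))
  simp only [halfspace, Set.mem_ofPred_eq, single_dotProduct, neg_dotProduct, one_mul, le_refl,
    true_iff, neg_le_neg_iff] at h₁ h₂
  exact le_antisymm h₂ h₁

lemma union {X Y : Set (ι → ℤ)} (hX : IsHalfspaceCongruenceSet X)
    (hY : IsHalfspaceCongruenceSet Y) : IsHalfspaceCongruenceSet (X ∪ Y) := by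
  obtain ⟨P, m, hm, hX⟩ := hX
  obtain ⟨Q, k, hk, hY⟩ := hY
  refine ⟨P ∪ Q, m * k, Nat.mul_pos hm hk, fun y z hside hres => ?_⟩
  have hres' : ∀ i, y i ≡ z i [ZMOD (m : ℤ) * k] := by exact_mod_cast hres
  rintro (hy | hy)
  · exact .inl <| hX y z (fun p hp => hside p (Finset.mem_union_left _ hp))
      (fun i => (hres' i).of_mul_right _) hy
  · exact .inr <| hY y z (fun p hp => hside p (Finset.mem_union_right _ hp))
      (fun i => (hres' i).of_mul_left _) hy

end IsHalfspaceCongruenceSet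

/-- If `n ≥ m` is the least witness, then `n - m` is not one, so some sign flips between
`n - m` and `n`, which confines `t p - n * α p` to a window of width `2 * m * |α p|`. -/
lemma exists_witness_lt_or_near_threshold {κ : Type*} (s : Finset κ) (t α : κ → ℤ) {m : ℕ}
    (hm : 0 < m) {φ : ℕ → Prop}
    (hφ : ∀ n n' : ℕ, (n : ℤ) ≡ n' [ZMOD m] →
      (∀ p ∈ s, (n * α p ≤ t p ↔ n' * α p ≤ t p)) → φ n → φ n')
    (h : ∃ n, φ n) :
    ∃ n, φ n ∧ (n < m ∨ ∃ p ∈ s, t p - n * α p ∈ Finset.Ico (-(m * |α p|)) (m * |α p|)) := by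
  refine ⟨Nat.find h, Nat.find_spec h, or_iff_not_imp_left.2 fun hle => ?_⟩
  push Not at hle
  have hmin := Nat.find_min h (m := Nat.find h - m) (by omega)
  have hcast : ((Nat.find h - m : ℕ) : ℤ) = Nat.find h - m := by omega
  by_contra! hfar
  refine hmin (hφ _ _ ((Int.modEq_iff_dvd.2 ⟨-1, by rw [hcast]; ring⟩)) (fun p hp => ?_)
    (Nat.find_spec h))
  have := hfar p hp
  rw [Finset.mem_Ico, ← Nat.abs_cast, ← abs_mul] at this
  rw [hcast, ← sub_nonneg, ← sub_nonneg (b := _ * α p),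
    show t p - (Nat.find h - m) * α p = t p - Nat.find h * α p + m * α p by ring]
  generalize t p - Nat.find h * α p = k at this ⊢
  generalize (m : ℤ) * α p = β at this ⊢
  rcases abs_cases β with ⟨hβ, _⟩ | ⟨hβ, _⟩ <;> rw [hβ] at this <;> omega

lemma sub_smul_mem_halfspace_iff (q : (ι → ℤ) × ℤ) (y v : ι → ℤ) (N : ℤ) :
    y - N • v ∈ halfspace q ↔ y ∈ halfspace (q.1, q.2 + N * (q.1 ⬝ᵥ v)) := by
  simp only [halfspace, Set.mem_ofPred_eq, dotProduct_sub, dotProduct_smul, smul_eq_mul]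
  constructor <;> intro <;> linarith

/-- The halfspace that `y` lies in iff `y - N • v ∈ halfspace q`, once `N` is pinned down by
`N * (p.1 ⬝ᵥ v) = p.1 ⬝ᵥ y - e` (multiply by `|p.1 ⬝ᵥ v|` and substitute). -/
def elimHalfspace (v : ι → ℤ) (p : (ι → ℤ) × ℤ) (e : ℤ) (q : (ι → ℤ) × ℤ) : (ι → ℤ) × ℤ :=
  (|p.1 ⬝ᵥ v| • q.1 - ((p.1 ⬝ᵥ v).sign * (q.1 ⬝ᵥ v)) • p.1,
    |p.1 ⬝ᵥ v| * q.2 - (p.1 ⬝ᵥ v).sign * (q.1 ⬝ᵥ v) * e)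

section Elimination

variable {v y : ι → ℤ} {p : (ι → ℤ) × ℤ} {e N : ℤ}

lemma sub_smul_mem_halfspace_iff_of_mul_eq (hp : p.1 ⬝ᵥ v ≠ 0)
    (hN : N * (p.1 ⬝ᵥ v) = p.1 ⬝ᵥ y - e) (q : (ι → ℤ) × ℤ) :
    y - N • v ∈ halfspace q ↔ y ∈ halfspace (elimHalfspace v p e q) := by
  have key : |p.1 ⬝ᵥ v| * (q.1 ⬝ᵥ (y - N • v)) =
      (elimHalfspace v p e q).1 ⬝ᵥ y + (p.1 ⬝ᵥ v).sign * (q.1 ⬝ᵥ v) * e := by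
    simp only [elimHalfspace]
    rw [← Int.natCast_natAbs, ← Int.sign_mul_self]
    simp only [dotProduct_sub, dotProduct_smul, sub_dotProduct, smul_dotProduct, smul_eq_mul]
    linear_combination -(p.1 ⬝ᵥ v).sign * (q.1 ⬝ᵥ v) * hN
  simp only [halfspace, Set.mem_ofPred_eq]
  rw [← mul_le_mul_iff_of_pos_left (abs_pos.2 hp), key, elimHalfspace]
  constructor <;> intro <;> linarith

lemma nonneg_iff_mem_halfspace_of_mul_eq (hp : p.1 ⬝ᵥ v ≠ 0)
    (hN : N * (p.1 ⬝ᵥ v) = p.1 ⬝ᵥ y - e) :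
    0 ≤ N ↔ y ∈ halfspace ((p.1 ⬝ᵥ v).sign • p.1, (p.1 ⬝ᵥ v).sign * e) := by
  have key : (p.1 ⬝ᵥ v).sign * (p.1 ⬝ᵥ y) - (p.1 ⬝ᵥ v).sign * e = N * |p.1 ⬝ᵥ v| := by
    rw [← Int.natCast_natAbs, ← Int.sign_mul_self, ← mul_sub, ← hN]
    ring
  simp only [halfspace, Set.mem_ofPred_eq, smul_dotProduct, smul_eq_mul]
  rw [← mul_nonneg_iff_of_pos_right (abs_pos.2 hp), ← key, sub_nonneg]

end Elimination

lemma dotProduct_modEq {M : ℤ} {y z : ι → ℤ} (h : ∀ i, y i ≡ z i [ZMOD M]) (a : ι → ℤ) :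
    a ⬝ᵥ y ≡ a ⬝ᵥ z [ZMOD M] :=
  Int.ModEq.sum fun i _ => (h i).mul_left _

/-- A witness `n` with `n * (p.1 ⬝ᵥ v) = p.1 ⬝ᵥ y - e` moves from `y` to `z`: the new witness
`n + m * r`, where `p.1 ⬝ᵥ (z - y) = m * (p.1 ⬝ᵥ v) * r`, is congruent to `n` modulo `m`. -/
lemma exists_sub_nsmul_mem_of_mul_eq {P : Finset ((ι → ℤ) × ℤ)} {m : ℕ} {X : Set (ι → ℤ)}
    (hX : ∀ y z : ι → ℤ, (∀ p ∈ P, (y ∈ halfspace p ↔ z ∈ halfspace p)) →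
      (∀ i, y i ≡ z i [ZMOD m]) → y ∈ X → z ∈ X)
    {v y z : ι → ℤ} {p : (ι → ℤ) × ℤ} {e : ℤ} {n : ℕ} (hp : p.1 ⬝ᵥ v ≠ 0)
    (hn : n * (p.1 ⬝ᵥ v) = p.1 ⬝ᵥ y - e) (hres : ∀ i, y i ≡ z i [ZMOD m * (p.1 ⬝ᵥ v)])
    (hsign : y ∈ halfspace ((p.1 ⬝ᵥ v).sign • p.1, (p.1 ⬝ᵥ v).sign * e) →
      z ∈ halfspace ((p.1 ⬝ᵥ v).sign • p.1, (p.1 ⬝ᵥ v).sign * e))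
    (hside : ∀ q ∈ P, (y ∈ halfspace (elimHalfspace v p e q) ↔
      z ∈ halfspace (elimHalfspace v p e q)))
    (hmem : y - (n : ℤ) • v ∈ X) : ∃ n' : ℕ, z - (n' : ℤ) • v ∈ X := by
  obtain ⟨r, hr⟩ := Int.modEq_iff_dvd.1 (dotProduct_modEq hres p.1)
  have hn' : (n + m * r) * (p.1 ⬝ᵥ v) = p.1 ⬝ᵥ z - e := by linear_combination hn - hr
  have hn'0 := (nonneg_iff_mem_halfspace_of_mul_eq hp hn').2
    (hsign ((nonneg_iff_mem_halfspace_of_mul_eq hp hn).1 (Nat.cast_nonneg n)))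
  refine ⟨((n : ℤ) + m * r).toNat, ?_⟩
  rw [Int.toNat_of_nonneg hn'0]
  refine hX _ _ (fun q hq => ?_) (fun i => ?_) hmem
  · rw [sub_smul_mem_halfspace_iff_of_mul_eq hp hn, sub_smul_mem_halfspace_iff_of_mul_eq hp hn']
    exact hside q hq
  · simp only [Pi.sub_apply, Pi.smul_apply, smul_eq_mul]
    exact (((hres i).of_mul_right _).sub_right _).trans
      (Int.modEq_iff_dvd.2 ⟨-(r * v i), by ring⟩)

theorem IsHalfspaceCongruenceSet.setOf_exists_sub_smul_mem {X : Set (ι → ℤ)}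
    (hX : IsHalfspaceCongruenceSet X) (v : ι → ℤ) :
    IsHalfspaceCongruenceSet {y | ∃ n : ℕ, y - (n : ℤ) • v ∈ X} := by
  obtain ⟨P, m, hm, hX⟩ := hX
  set α : (ι → ℤ) × ℤ → ℤ := fun p => p.1 ⬝ᵥ v
  set W : (ι → ℤ) × ℤ → Finset ℤ := fun p => Finset.Ico (-(m * |α p|)) (m * |α p|)
  set M : ℕ := m * ∏ p ∈ P with α p ≠ 0, (α p).natAbs
  have hM : ∀ p ∈ P, α p ≠ 0 → (m : ℤ) * α p ∣ M := fun p hp hα => by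
    rw [← Int.natAbs_dvd, Int.natAbs_mul, Int.natAbs_natCast]
    exact Int.natCast_dvd_natCast.2 (Nat.mul_dvd_mul_left m
      (Finset.dvd_prod_of_mem _ (Finset.mem_filter.2 ⟨hp, hα⟩)))
  have hMpos : 0 < M := Nat.mul_pos hm (Finset.prod_pos fun p hp =>
    Int.natAbs_pos.2 (Finset.mem_filter.1 hp).2)
  -- Witnesses `n < m` are transported by the halfspaces of `X` translated by `n • v`, witnesses
  -- at offset `k ∈ W p` from the threshold of `p` by those of `exists_sub_nsmul_mem_of_mul_eq`
  -- with `e = p.2 + k`.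
  refine ⟨(P ×ˢ Finset.range m).image (fun qj => (qj.1.1, qj.1.2 + qj.2 * α qj.1)) ∪
      P.biUnion (fun p => (W p).image fun k => ((α p).sign • p.1, (α p).sign * (p.2 + k))) ∪
      (P ×ˢ P).biUnion (fun pq => (W pq.1).image fun k => elimHalfspace v pq.1 (pq.1.2 + k) pq.2),
    M, hMpos, ?_⟩
  rintro y z hside hres ⟨n₀, hn₀⟩
  obtain ⟨n, hn, hsmall | ⟨p, hp, hk⟩⟩ := exists_witness_lt_or_near_threshold P
    (fun p => p.1 ⬝ᵥ y - p.2) α hm (φ := fun n => y - (n : ℤ) • v ∈ X)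
    (fun n n' hnn' hsides => hX (y - (n : ℤ) • v) (y - (n' : ℤ) • v)
      (fun p hp => by
        rw [sub_smul_mem_halfspace_iff, sub_smul_mem_halfspace_iff]
        simpa only [halfspace, Set.mem_ofPred_eq, le_sub_iff_add_le'] using hsides p hp)
      (fun i => Int.ModEq.sub_left _ (hnn'.mul_right (v i))))
    ⟨n₀, hn₀⟩
  · refine ⟨n, hX (y - (n : ℤ) • v) (z - (n : ℤ) • v) (fun q hq => ?_)
      (fun i => ((hres i).of_dvd (Int.natCast_dvd_natCast.2 (Nat.dvd_mul_right _ _))).sub_right _)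
      hn⟩
    rw [sub_smul_mem_halfspace_iff, sub_smul_mem_halfspace_iff]
    exact hside _ (Finset.mem_union_left _ (Finset.mem_union_left _
      (Finset.mem_image.2 ⟨(q, n), Finset.mem_product.2 ⟨hq, Finset.mem_range.2 hsmall⟩, rfl⟩)))
  have hα : α p ≠ 0 := fun h0 => by simp [h0] at hk
  exact exists_sub_nsmul_mem_of_mul_eq hX hα (e := p.2 + (p.1 ⬝ᵥ y - p.2 - n * α p))
    (by ring) (fun i => (hres i).of_dvd (hM p hp hα))
    (hside _ (Finset.mem_union_left _ (Finset.mem_union_right _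
      (Finset.mem_biUnion.2 ⟨p, hp, Finset.mem_image_of_mem _ hk⟩)))).1
    (fun q hq => hside _ (Finset.mem_union_right _ (Finset.mem_biUnion.2
      ⟨(p, q), Finset.mem_product.2 ⟨hp, hq⟩, Finset.mem_image_of_mem _ hk⟩)))
    hn

theorem IsHalfspaceCongruenceSet.of_isLinearSetZd {S : Set (ι → ℤ)} (hS : IsLinearSetZd S) :
    IsHalfspaceCongruenceSet S := by
  obtain ⟨x, V, rfl⟩ := hS
  induction V using Finset.induction_on with
  | empty => simpa using IsHalfspaceCongruenceSet.singleton x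
  | insert v V hv ih =>
    convert ih.setOf_exists_sub_smul_mem v using 1
    ext y
    constructor
    · rintro ⟨c, rfl⟩
      exact ⟨c v, c, by rw [Finset.sum_insert hv]; abel⟩
    · rintro ⟨n, c, hc⟩
      refine ⟨Function.update c v n, ?_⟩
      rw [Finset.sum_insert hv, Function.update_self, Finset.sum_congr rfl fun w hw => by
        rw [Function.update_of_ne (ne_of_mem_of_not_mem hw hv)], add_left_comm, ← hc]
      abel

theorem IsHalfspaceCongruenceSet.of_isSemilinearSetZd {S : Set (ι → ℤ)}
    (hS : IsSemilinearSetZd S) : IsHalfspaceCongruenceSet S := by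
  obtain ⟨F, hF, rfl⟩ := hS
  induction F using Finset.induction_on with
  | empty => simpa using IsHalfspaceCongruenceSet.empty
  | insert T F hT ih =>
    rw [Finset.set_biUnion_insert]
    exact (of_isLinearSetZd (hF T (Finset.mem_insert_self T F))).union
      (ih fun U hU => hF U (Finset.mem_insert_of_mem hU))

open Filter

def IsRecurrentValue {β : Type*} (f : (ι → ℤ) → β) (b : β) : Prop :=
  ∀ L : ℕ, ∃ x, L ≤ supNorm x ∧ f x = b

lemma IsRecurrentValue.exists_ne {β : Type*} {f : (ι → ℤ) → β} {b : β}
    (h : IsRecurrentValue f b) : ∃ x y, x ≠ y ∧ f x = b ∧ f y = b := by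
  obtain ⟨x, -, hx⟩ := h 0
  obtain ⟨y, hy, hyb⟩ := h (supNorm x + 1)
  exact ⟨x, y, fun hxy => by rw [hxy] at hy; omega, hx, hyb⟩

lemma isRecurrentValue_iff_frequently {β : Type*} {f : (ι → ℤ) → β} {b : β} :
    IsRecurrentValue f b ↔ ∃ᶠ x in comap supNorm atTop, f x = b := by
  simp [(atTop_basis.comap supNorm).frequently_iff, IsRecurrentValue]

theorem ncard_isRecurrentValue_le {β γ : Type*} {f : (ι → ℤ) → β} {g : (ι → ℤ) → γ}
    (hg : (Set.range g).Finite) (hfg : ∀ x y, g x = g y → f x = f y) :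
    {b | IsRecurrentValue f b}.ncard ≤ {t | IsRecurrentValue g t}.ncard := by
  have key : ∀ b, IsRecurrentValue f b → ∃ t, IsRecurrentValue g t ∧ ∃ x, g x = t ∧ f x = b := by
    intro b hb
    rw [isRecurrentValue_iff_frequently] at hb
    obtain ⟨t, -, ht⟩ := (hg.toFinset.frequently_exists (p := fun t x => g x = t ∧ f x = b)).1
      (hb.mono fun x hx => ⟨g x, by simp, rfl, hx⟩)
    exact ⟨t, isRecurrentValue_iff_frequently.2 (ht.mono fun _ => And.left), ht.exists⟩
  have : Nonempty γ := ⟨g 0⟩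
  choose! φ hφ hφf using key
  refine Set.ncard_le_ncard_of_injOn φ (fun b hb => hφ b hb) (fun b hb b' hb' h => ?_)
    (hg.subset fun t ht => ?_)
  · obtain ⟨x, hx, rfl⟩ := hφf b hb
    obtain ⟨x', hx', rfl⟩ := hφf b' hb'
    exact hfg x x' (hx.trans (h.trans hx'.symm))
  · obtain ⟨x, -, hx⟩ := ht 0
    exact ⟨x, hx⟩

lemma dotProduct_eq_zero_of_mem_span {w : ι → ℚ} {s : Set (ι → ℚ)} (hs : ∀ v ∈ s, w ⬝ᵥ v = 0)
    {v : ι → ℚ} (hv : v ∈ Submodule.span ℚ s) : w ⬝ᵥ v = 0 :=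
  (Submodule.span_le (p := LinearMap.ker (dotProductBilin ℚ ℚ w))).2 hs hv

/-- A maximal linearly independent set of rows has at most `card ι - 1` elements, since the rows
are orthogonal to `u ≠ 0`. -/
lemma exists_finset_determining_dotProducts {κ : Type} [Fintype κ] (a : κ → ι → ℤ) {u : ι → ℤ}
    (hu : u ≠ 0) (hau : ∀ p, a p ⬝ᵥ u = 0) :
    ∃ J : Finset κ, J.card ≤ Fintype.card ι - 1 ∧ ∀ x x' : ι → ℤ,
      (∀ j ∈ J, a j ⬝ᵥ x = a j ⬝ᵥ x') → ∀ p, a p ⬝ᵥ x = a p ⬝ᵥ x' := by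
  set aq : κ → ι → ℚ := fun p i => a p i
  have haq : ∀ p x, ((a p ⬝ᵥ x : ℤ) : ℚ) = (fun i => (x i : ℚ)) ⬝ᵥ aq p := fun p x => by
    simp only [dotProduct, aq, Int.cast_sum, Int.cast_mul, mul_comm]
  obtain ⟨J, f, hf, hspan, hli⟩ := exists_linearIndependent' ℚ aq
  have : Fintype J := Fintype.ofInjective f hf
  refine ⟨Finset.univ.image f, ?_, fun x x' h p => ?_⟩
  · have hne : Submodule.span ℚ (Set.range aq) ≠ ⊤ := by
      intro htop
      have := dotProduct_eq_zero_of_mem_span (w := fun i => (u i : ℚ)) (s := Set.range aq)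
        (by rintro _ ⟨p, rfl⟩; rw [← haq, hau, Int.cast_zero]) (v := fun i => (u i : ℚ))
        (htop ▸ Submodule.mem_top)
      exact hu (funext fun i => by simpa using congrFun (dotProduct_self_eq_zero.1 this) i)
    have := Submodule.finrank_lt hne
    rw [Finset.card_image_of_injective _ hf, Finset.card_univ,
      linearIndependent_iff_card_eq_finrank_span.1 hli, Set.finrank, hspan]
    simp only [Module.finrank_pi] at this
    omega
  · have key : ((fun i => (x i : ℚ)) - fun i => (x' i : ℚ)) ⬝ᵥ aq p = 0 :=
      dotProduct_eq_zero_of_mem_span (s := Set.range (aq ∘ f))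
        (by
          rintro _ ⟨j, rfl⟩
          rw [Function.comp_apply, sub_dotProduct, ← haq, ← haq,
            h _ (Finset.mem_image_of_mem _ (Finset.mem_univ j)), sub_self])
        (hspan ▸ Submodule.subset_span ⟨p, rfl⟩)
    rw [sub_dotProduct, ← haq, ← haq, sub_eq_zero] at key
    exact_mod_cast key

theorem ncard_dotProducts_le {κ : Type} [Fintype κ] (a : κ → ι → ℤ) {u : ι → ℤ} (hu : u ≠ 0)
    (hau : ∀ p, a p ⬝ᵥ u = 0) (s : ℕ) :
    {y : κ → ℤ | (∃ x, ∀ p, y p = a p ⬝ᵥ x) ∧ ∀ p, |y p| ≤ s}.ncard ≤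
      (2 * s + 1) ^ (Fintype.card ι - 1) := by
  obtain ⟨J, hJ, hdet⟩ := exists_finset_determining_dotProducts a hu hau
  calc _ ≤ (Fintype.piFinset fun _ : J => Finset.Icc (-(s : ℤ)) s : Set (J → ℤ)).ncard := by
        refine Set.ncard_le_ncard_of_injOn (fun y j => y j) ?_ ?_ (Finset.finite_toSet _)
        · rintro y ⟨-, hy⟩
          simp only [Finset.mem_coe, Fintype.mem_piFinset, Finset.mem_Icc]
          exact fun j => abs_le.1 (hy j)
        · rintro y ⟨⟨x, hx⟩, -⟩ y' ⟨⟨x', hx'⟩, -⟩ h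
          refine funext fun p => ?_
          rw [hx, hx', hdet x x' fun j hj => by rw [← hx, ← hx']; exact congrFun h ⟨j, hj⟩]
    _ = (2 * s + 1) ^ J.card := by
        rw [Set.ncard_coe_finset, Fintype.card_piFinset, Int.card_Icc, Finset.prod_const,
          Finset.card_univ, Fintype.card_coe]
        congr 1; omega
    _ ≤ _ := Nat.pow_le_pow_right (by omega) hJ

lemma abs_dotProduct_fin_le {n : ℕ} (a : ι → ℤ) (w : ι → Fin n) :
    |a ⬝ᵥ fun i => (w i : ℤ)| ≤ n * ∑ i, |a i| := by
  rw [Finset.mul_sum]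
  refine (Finset.abs_sum_le_sum_abs _ _).trans (Finset.sum_le_sum fun i _ => ?_)
  rw [abs_mul, mul_comm, abs_of_nonneg (by positivity : (0 : ℤ) ≤ (w i : ℤ))]
  exact mul_le_mul_of_nonneg_right (by exact_mod_cast (w i).isLt.le) (abs_nonneg _)

def windowPosition (K : ℕ) (s : ℤ) : SignType :=
  if s ≤ -K then -1 else if (K : ℤ) < s then 1 else 0

lemma le_iff_le_of_windowPosition_eq {K : ℕ} {s s' t : ℤ} (ht : |t| ≤ K)
    (h : windowPosition K s = windowPosition K s') (h0 : windowPosition K s = 0 → s = s') :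
    s ≤ t ↔ s' ≤ t := by
  rw [abs_le] at ht
  unfold windowPosition at h h0
  split_ifs at h h0 <;> first | omega | simp_all

section Signature

variable {κ : Type} (a : κ → ι → ℤ) (c : κ → ℤ) (m : ℕ)

/-- The third component records `a p ⬝ᵥ x` only for the halfspaces whose offset lies in the
window, so that on each fibre of the first component it is a linear function of `x`. -/
def signature (K : ℕ) (x : ι → ℤ) : ((κ → SignType) × (ι → ℤ)) × (κ → ℤ) :=
  ((fun p => windowPosition K (c p - a p ⬝ᵥ x), fun i => x i % m),
    fun p => if windowPosition K (c p - a p ⬝ᵥ x) = 0 then a p ⬝ᵥ x else 0)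

variable {a c m}

lemma blockOf_eq_of_signature_eq {X : Set (ι → ℤ)}
    (hX : ∀ y z, (∀ p, c p ≤ a p ⬝ᵥ y ↔ c p ≤ a p ⬝ᵥ z) → (∀ i, y i ≡ z i [ZMOD m]) →
      (y ∈ X ↔ z ∈ X))
    {n K : ℕ} (hK : ∀ p (w : ι → Fin n), |a p ⬝ᵥ fun i => (w i : ℤ)| ≤ K) {x y : ι → ℤ}
    (h : signature a c m K x = signature a c m K y) : blockOf X x n = blockOf X y n := by
  have hpos p := congrFun (congrArg (·.1.1) h) p
  have hres i := congrFun (congrArg (·.1.2) h) i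
  have hval p := congrFun (congrArg (·.2) h) p
  simp only [signature] at hpos hres hval
  funext w
  refine propext (hX _ _ (fun p => ?_) fun i => Int.ModEq.add_right _ (hres i))
  change c p ≤ a p ⬝ᵥ (x + fun i => (w i : ℤ)) ↔ c p ≤ a p ⬝ᵥ (y + fun i => (w i : ℤ))
  rw [dotProduct_add, dotProduct_add, ← sub_le_iff_le_add', ← sub_le_iff_le_add']
  refine le_iff_le_of_windowPosition_eq (hK p w) (hpos p) fun h0 => ?_
  have := hval p
  rw [if_pos h0, if_pos (hpos p ▸ h0)] at this
  rw [this]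

lemma signature_mem [Fintype κ] (hm : 0 < m) (K : ℕ) (x : ι → ℤ) :
    signature a c m K x ∈ (Finset.univ ×ˢ Fintype.piFinset (fun _ : ι => Finset.Ico 0 (m : ℤ))) ×ˢ
      Fintype.piFinset (fun p => Finset.Icc (-(|c p| + K)) (|c p| + K)) := by
  simp only [Finset.mem_product, Finset.mem_univ, true_and, Fintype.mem_piFinset, Finset.mem_Ico,
    Finset.mem_Icc, signature]
  refine ⟨fun i => ⟨Int.emod_nonneg _ (by omega), Int.emod_lt_of_pos _ (by omega)⟩, fun p => ?_⟩
  unfold windowPosition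
  split_ifs <;> simp_all <;> constructor <;> linarith [abs_le.1 (le_refl |c p|)]

lemma signature_snd_eq (K : ℕ) (x : ι → ℤ) (p : κ) :
    (signature a c m K x).2 p =
      (if (signature a c m K x).1.1 p = 0 then a p else 0) ⬝ᵥ x := by
  unfold signature
  dsimp only
  split_ifs <;> simp

lemma exists_ne_zero_dotProduct_eq_zero_of_isRecurrentValue {K : ℕ}
    {t : ((κ → SignType) × (ι → ℤ)) × (κ → ℤ)} (ht : IsRecurrentValue (signature a c m K) t) :
    ∃ u : ι → ℤ, u ≠ 0 ∧ ∀ p, (if t.1.1 p = 0 then a p else 0) ⬝ᵥ u = 0 := by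
  obtain ⟨x, y, hxy, rfl, hy⟩ := ht.exists_ne
  refine ⟨x - y, sub_ne_zero.2 hxy, fun p => ?_⟩
  have hyp := signature_snd_eq (a := a) (c := c) (m := m) K y p
  rw [hy] at hyp
  rw [dotProduct_sub, ← signature_snd_eq, ← hyp, sub_self]

lemma ncard_isRecurrentValue_signature_fst_eq_le [Fintype κ] (hm : 0 < m) (K : ℕ) {s : ℕ}
    (hs : ∀ p, |c p| + K ≤ s) (σρ : (κ → SignType) × (ι → ℤ)) :
    {t | IsRecurrentValue (signature a c m K) t ∧ t.1 = σρ}.ncard ≤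
      (2 * s + 1) ^ (Fintype.card ι - 1) := by
  rcases Set.eq_empty_or_nonempty {t | IsRecurrentValue (signature a c m K) t ∧ t.1 = σρ} with
    hempty | ⟨t₀, ht₀, rfl⟩
  · rw [hempty, Set.ncard_empty]
    exact Nat.zero_le _
  obtain ⟨u, hu, hau⟩ := exists_ne_zero_dotProduct_eq_zero_of_isRecurrentValue ht₀
  refine (Set.ncard_le_ncard_of_injOn Prod.snd ?_ ?_ ?_).trans (ncard_dotProducts_le _ hu hau s)
  · rintro t ⟨htT, ht⟩
    obtain ⟨x, -, rfl⟩ := htT 0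
    refine ⟨⟨x, fun p => by rw [signature_snd_eq, ht]⟩, fun p => ?_⟩
    have := (Finset.mem_product.1 (signature_mem (a := a) (c := c) hm K x)).2
    simp only [Fintype.mem_piFinset, Finset.mem_Icc] at this
    exact abs_le.2 ⟨by linarith [(this p).1, hs p], by linarith [(this p).2, hs p]⟩
  · rintro t ⟨-, ht⟩ t' ⟨-, ht'⟩ h
    exact Prod.ext (ht.trans ht'.symm) h
  · refine (Fintype.piFinset fun _ : κ => Finset.Icc (-(s : ℤ)) s).finite_toSet.subset ?_
    rintro y ⟨-, hy⟩
    exact Finset.mem_coe.2 (Fintype.mem_piFinset.2 fun p => Finset.mem_Icc.2 (abs_le.1 (hy p)))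

theorem ncard_isRecurrentValue_signature_le [Fintype κ] (hm : 0 < m) (K : ℕ) {s : ℕ}
    (hs : ∀ p, |c p| + K ≤ s) :
    {t | IsRecurrentValue (signature a c m K) t}.ncard ≤
      (2 * s + 1) ^ (Fintype.card ι - 1) * (3 ^ Fintype.card κ * m ^ Fintype.card ι) := by
  set T := {t | IsRecurrentValue (signature a c m K) t}
  have hT : T.Finite := (Finset.finite_toSet _).subset fun t ht => by
    obtain ⟨x, -, rfl⟩ := ht 0
    exact signature_mem hm K x
  set keys := (Finset.univ : Finset (κ → SignType)) ×ˢ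
    Fintype.piFinset (fun _ : ι => Finset.Ico 0 (m : ℤ))
  have hkeys : keys.card = 3 ^ Fintype.card κ * m ^ Fintype.card ι := by
    simp [keys, Finset.card_univ, Fintype.card_piFinset, show Fintype.card SignType = 3 from rfl]
  rw [← hT.coe_toFinset, Set.ncard_coe_finset, ← hkeys]
  refine Finset.card_le_mul_card_image_of_maps_to (f := Prod.fst) (fun t ht => ?_) _
    fun σρ _ => ?_
  · obtain ⟨x, -, rfl⟩ := (hT.mem_toFinset.1 ht) 0
    exact (Finset.mem_product.1 (signature_mem hm K x)).1
  rw [← Set.ncard_coe_finset]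
  simp only [Finset.coe_filter, Set.Finite.mem_toFinset]
  exact ncard_isRecurrentValue_signature_fst_eq_le hm K hs σρ

end Signature

theorem exists_recBlockCount_le_of_forall_mem_iff {κ : Type} [Fintype κ] (a : κ → ι → ℤ) (c : κ → ℤ)
    {m : ℕ} (hm : 0 < m) {X : Set (ι → ℤ)}
    (hX : ∀ y z, (∀ p, c p ≤ a p ⬝ᵥ y ↔ c p ≤ a p ⬝ᵥ z) → (∀ i, y i ≡ z i [ZMOD m]) →
      (y ∈ X ↔ z ∈ X)) :
    ∃ C : ℕ, ∀ n, 1 ≤ n → recBlockCount X n ≤ C * n ^ (Fintype.card ι - 1) := by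
  set N : ℕ := ∑ p, ∑ i, (a p i).natAbs
  set S : ℕ := ∑ p, (c p).natAbs
  set e := Fintype.card ι - 1
  set F := 3 ^ Fintype.card κ * m ^ Fintype.card ι
  refine ⟨(2 * (S + N) + 1) ^ e * F, fun n hn => ?_⟩
  have hK : ∀ p (w : ι → Fin n), |a p ⬝ᵥ fun i => (w i : ℤ)| ≤ (n * N : ℕ) := by
    intro p w
    refine (abs_dotProduct_fin_le _ w).trans ?_
    have : ∑ i, |a p i| ≤ (N : ℤ) := by
      simp only [N, Nat.cast_sum, Int.natCast_natAbs]
      exact Finset.single_le_sum (f := fun p => ∑ i, |a p i|)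
        (fun _ _ => Finset.sum_nonneg fun _ _ => abs_nonneg _) (Finset.mem_univ p)
    push_cast
    exact mul_le_mul_of_nonneg_left this (Nat.cast_nonneg n)
  have hs : ∀ p, |c p| + (n * N : ℕ) ≤ (S + n * N : ℕ) := by
    intro p
    have : |c p| ≤ (S : ℤ) := by
      simp only [S, Nat.cast_sum, Int.natCast_natAbs]
      exact Finset.single_le_sum (f := fun p => |c p|) (fun _ _ => abs_nonneg _)
        (Finset.mem_univ p)
    push_cast
    linarith
  calc recBlockCount X n = {B | IsRecurrentValue (blockOf X · n) B}.ncard := rfl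
    _ ≤ {t | IsRecurrentValue (signature a c m (n * N)) t}.ncard :=
        ncard_isRecurrentValue_le
          ((Finset.finite_toSet _).subset (by rintro _ ⟨x, rfl⟩; exact signature_mem hm _ x))
          fun x y h => blockOf_eq_of_signature_eq hX hK h
    _ ≤ (2 * (S + n * N) + 1) ^ e * F := ncard_isRecurrentValue_signature_le hm _ hs
    _ ≤ ((2 * (S + N) + 1) * n) ^ e * F := by gcongr; nlinarith
    _ = (2 * (S + N) + 1) ^ e * F * n ^ e := by rw [mul_pow]; ring

theorem IsHalfspaceCongruenceSet.exists_recBlockCount_le {X : Set (ι → ℤ)}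
    (hX : IsHalfspaceCongruenceSet X) :
    ∃ C : ℕ, ∀ n, 1 ≤ n → recBlockCount X n ≤ C * n ^ (Fintype.card ι - 1) := by
  obtain ⟨P, m, hm, hX⟩ := hX
  exact exists_recBlockCount_le_of_forall_mem_iff (fun p : P => p.1.1) (fun p => p.1.2) hm
    fun y z hside hres => ⟨hX y z (fun p hp => hside ⟨p, hp⟩) hres,
      hX z y (fun p hp => (hside ⟨p, hp⟩).symm) fun i => (hres i).symm⟩

/-- Complexity of Presburger-definable (semilinear) sets:
if `X ⊆ ℤ^(d+1)` is semilinear, then `R_X(n) ∈ O(n^d)`. -/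
theorem semilinear_recBlockCount_bound (d : ℕ) (X : Set (Fin (d + 1) → ℤ))
    (h : IsSemilinearSetZd X) :
    ∃ C : ℝ, 0 < C ∧ ∀ n : ℕ, 1 ≤ n →
      (recBlockCount X n : ℝ) ≤ C * (n : ℝ) ^ d := by
  obtain ⟨C, hC⟩ := (IsHalfspaceCongruenceSet.of_isSemilinearSetZd h).exists_recBlockCount_le
  refine ⟨C + 1, by positivity, fun n hn => ?_⟩
  have hCn : recBlockCount X n ≤ C * n ^ d := by simpa using hC n hn
  calc (recBlockCount X n : ℝ) ≤ C * (n : ℝ) ^ d := by exact_mod_cast hCn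
    _ ≤ (C + 1) * (n : ℝ) ^ d := by gcongr; linarith
end
end

section
/- Let d ≥ 1 and let π_1, …, π_j be affine hyperplanes in ℝ^d, where π_i = {x ∈ ℝ^d : φ_i(x) = c_i} for nonzero linear forms φ_i on ℝ^d and constants c_i ∈ ℝ, with direction subspaces π_i' = ker φ_i. Let n ≥ 1. If there exist infinitely many distinct vectors y ∈ ℤ^d such that the cube y + [0,n]^d (viewed in ℝ^d) intersects each of the hyperplanes π_1, …, π_j, then the intersection π_1' ∩ ⋯ ∩ π_j' has dimension at least 1, i.e. it contains a nonzero vector. -/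
/-!
If the hyperplane directions `ker φ_m` had no common nonzero vector, `x ↦ (φ_m x)_m` would be
injective, hence (in finite dimension) antilipschitz. A translate `y + [0,n]^d` meeting every
hyperplane forces `φ_m y ∈ c_m - φ_m([0,n]^d)`, a compact set, so all such `y` lie in one bounded
region of `ℝ^d`, which contains only finitely many integer points.
-/

open Bornology Set

theorem LinearMap.isBounded_preimage_of_injective {𝕜 E F : Type*} [NontriviallyNormedField 𝕜]
    [CompleteSpace 𝕜] [NormedAddCommGroup E] [NormedSpace 𝕜 E] [FiniteDimensional 𝕜 E]
    [NormedAddCommGroup F] [NormedSpace 𝕜 F] {f : E →ₗ[𝕜] F} (hf : Function.Injective f)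
    {s : Set F} (hs : IsBounded s) : IsBounded (f ⁻¹' s) := by
  obtain ⟨K, -, hK⟩ := f.injective_iff_antilipschitz.mp hf
  exact hK.isBounded_preimage hs

theorem isometry_intCast_pi (ι : Type*) [Fintype ι] :
    Isometry (fun (y : ι → ℤ) i => (y i : ℝ)) :=
  .piMap _ fun _ => isometry_iff_dist_eq.mpr Int.dist_cast_real

theorem finite_setOf_intCast_mem {ι : Type*} [Fintype ι] {s : Set (ι → ℝ)} (hs : IsBounded s) :
    {y : ι → ℤ | (fun i => (y i : ℝ)) ∈ s}.Finite := by
  have hbdd := (isometry_intCast_pi ι).antilipschitz.isBounded_preimage hs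
  exact (Metric.isCompact_of_isClosed_isBounded isClosed_closure hbdd.closure).finite_of_discrete
    |>.subset subset_closure

theorem hyperplanes_common_direction_general (d j : ℕ)
    (φ : Fin j → (Fin d → ℝ) →ₗ[ℝ] ℝ)
    (c : Fin j → ℝ) (n : ℕ)
    (hinf : {y : Fin d → ℤ | ∀ m, ∃ t : Fin d → ℝ,
      (∀ i, t i ∈ Set.Icc (0 : ℝ) (n : ℝ)) ∧
      φ m ((fun i => (y i : ℝ)) + t) = c m}.Infinite) :
    ∃ w : Fin d → ℝ, w ≠ 0 ∧ ∀ m, φ m w = 0 := by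
  contrapose! hinf with hker
  have hinj : Function.Injective (LinearMap.pi φ) := by
    refine LinearMap.ker_eq_bot.mp <| LinearMap.ker_eq_bot'.mpr fun w hw => ?_
    by_contra hw0
    obtain ⟨m, hm⟩ := hker w hw0
    exact hm (congrFun hw m)
  set cube : Set (Fin d → ℝ) := univ.pi fun _ => Icc 0 n
  set T : Set (Fin j → ℝ) := univ.pi fun m => (fun t => c m - φ m t) '' cube
  have hT : IsCompact T := isCompact_univ_pi fun m =>
    (isCompact_univ_pi fun _ => isCompact_Icc).image
      (continuous_const.sub (φ m).continuous_of_finiteDimensional)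
  refine (finite_setOf_intCast_mem
    (LinearMap.isBounded_preimage_of_injective hinj hT.isBounded)).subset fun y hy m _ => ?_
  obtain ⟨t, ht, hyt⟩ := hy m
  exact ⟨t, fun i _ => ht i, by rw [map_add] at hyt; simp [← hyt]⟩

/-- Lemma: if infinitely many integer translates of the cube `[0,n]^d`
intersect each of the hyperplanes `π_m = {x : φ_m x = c_m}`, then the
intersection of the direction subspaces `ker φ_m` contains a nonzero vector. -/
theorem hyperplanes_common_direction (d j : ℕ) (hd : 1 ≤ d)
    (φ : Fin j → (Fin d → ℝ) →ₗ[ℝ] ℝ) (hφ : ∀ m, φ m ≠ 0)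
    (c : Fin j → ℝ) (n : ℕ) (hn : 1 ≤ n)
    (hinf : {y : Fin d → ℤ | ∀ m, ∃ t : Fin d → ℝ,
      (∀ i, t i ∈ Set.Icc (0 : ℝ) (n : ℝ)) ∧
      φ m ((fun i => (y i : ℝ)) + t) = c m}.Infinite) :
    ∃ w : Fin d → ℝ, w ≠ 0 ∧ ∀ m, φ m w = 0 :=
  hyperplanes_common_direction_general d j φ c n hinf
end

section
/- Let d ≥ 1, M ⊆ ℤ^d and C > 0 be such that R_M(n) ≤ C·n^{d−1} for all n ≥ 1. Let n ∈ ℕ. Then there exists m₀ ∈ ℕ such that for all m satisfying m < n and m^d − C·n^{d−1} ≥ 1, and for all z ∈ ℤ^d with ‖z‖ ≥ m₀ + m, there exists a nonzero vector v ∈ ℤ^d with ‖v‖ ≤ m such that M_{z−v, n−m} = M_{z, n−m} = M_{z+v, n−m}. -/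
open Classical

noncomputable section

/-- Linear subset of `ℤ^ι`. -/
def IsLinearSetInt {ι : Type} [Fintype ι] (S : Set (ι → ℤ)) : Prop :=
  ∃ (x : ι → ℤ) (V : Finset (ι → ℤ)),
    S = {y | ∃ c : (ι → ℤ) → ℕ, y = x + ∑ v ∈ V, (c v : ℤ) • v}

/-- Semilinear = finite union of linear sets. -/
def IsSemilinearSetInt {ι : Type} [Fintype ι] (S : Set (ι → ℤ)) : Prop :=
  ∃ F : Finset (Set (ι → ℤ)), (∀ T ∈ F, IsLinearSetInt T) ∧ S = ⋃ T ∈ F, T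

/-!
Far from the origin every block of size `n` is recurrent, so the `(m + 1)^d` blocks of size `n`
at the points `z - w`, `w ∈ [0, m]^d`, take at most `R_M(n) < m^d` values. Two of them coincide,
say at `z - w₁` and `z - w₂`; cutting the common block at the offsets `w₂` and `w₁` gives blocks
of size `n - m` showing that `v = w₁ - w₂` is a period near `z` in both directions.
-/

section Blocks

variable {ι : Type} [Fintype ι]

lemma supNorm_le_iff (x : ι → ℤ) (k : ℕ) : supNorm x ≤ k ↔ ∀ i, (x i).natAbs ≤ k := by
  simp [supNorm, Finset.sup_le_iff]

lemma supNorm_le_supNorm_sub_add (x y : ι → ℤ) : supNorm x ≤ supNorm (x - y) + supNorm y := by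
  rw [supNorm_le_iff]
  intro i
  have hxy : ((x - y) i).natAbs ≤ supNorm (x - y) :=
    Finset.le_sup (f := fun i => ((x - y) i).natAbs) (Finset.mem_univ i)
  have hy : (y i).natAbs ≤ supNorm y :=
    Finset.le_sup (f := fun i => (y i).natAbs) (Finset.mem_univ i)
  rw [Pi.sub_apply] at hxy
  omega

lemma blockOf_add_eq_of_blockOf_eq {M : Set (ι → ℤ)} {x y : ι → ℤ} {n k : ℕ}
    (h : blockOf M x n = blockOf M y n) (u : ι → ℕ) (hu : ∀ i, u i + k ≤ n) :
    blockOf M (x + ((↑) ∘ u)) k = blockOf M (y + ((↑) ∘ u)) k := by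
  funext t
  have := congrFun h fun i => ⟨u i + t i, by have := (t i).isLt; have := hu i; omega⟩
  simpa [blockOf, add_assoc] using this

/-- There are only finitely many blocks of size `n`, and each non-recurrent one occurs only in a
bounded region. -/
lemma exists_forall_isRecurrentBlock_blockOf (M : Set (ι → ℤ)) (n : ℕ) :
    ∃ m₀ : ℕ, ∀ x, m₀ ≤ supNorm x → IsRecurrentBlock M n (blockOf M x n) := by
  have hbound : ∀ B, ∃ L : ℕ, ∀ x, L ≤ supNorm x → blockOf M x n = B → IsRecurrentBlock M n B := by
    intro B
    by_cases hB : IsRecurrentBlock M n B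
    · exact ⟨0, fun _ _ _ => hB⟩
    · simp only [IsRecurrentBlock, not_forall, not_exists, not_and] at hB
      obtain ⟨L, hL⟩ := hB
      exact ⟨L, fun x hx hxB => absurd hxB (hL x hx)⟩
  choose L hL using hbound
  obtain ⟨m₀, hm₀⟩ := Finite.exists_le L
  exact ⟨m₀, fun x hx => hL _ x ((hm₀ _).trans hx) rfl⟩

lemma exists_ne_blockOf_sub_eq {M : Set (ι → ℤ)} {n m₀ m : ℕ}
    (hrec : ∀ x, m₀ ≤ supNorm x → IsRecurrentBlock M n (blockOf M x n))
    (hcount : recBlockCount M n < (m + 1) ^ Fintype.card ι) {z : ι → ℤ} (hz : m₀ + m ≤ supNorm z) :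
    ∃ w₁ w₂ : ι → ℕ, (∀ i, w₁ i ≤ m) ∧ (∀ i, w₂ i ≤ m) ∧ w₁ ≠ w₂ ∧
      blockOf M (z - ((↑) ∘ w₁)) n = blockOf M (z - ((↑) ∘ w₂)) n := by
  have hfin : {B | IsRecurrentBlock M n B}.Finite := Set.toFinite _
  have hcard : hfin.toFinset.card < (Fintype.piFinset fun _ : ι => Finset.range (m + 1)).card := by
    rwa [← Set.ncard_eq_toFinset_card _ hfin, Fintype.card_piFinset, Finset.card_range,
      Finset.prod_const, Finset.card_univ]
  have hmaps : ∀ w ∈ Fintype.piFinset fun _ : ι => Finset.range (m + 1),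
      blockOf M (z - ((↑) ∘ w)) n ∈ hfin.toFinset := by
    intro w hw
    rw [Fintype.mem_piFinset] at hw
    rw [Set.Finite.mem_toFinset]
    apply hrec
    have hw : supNorm ((↑) ∘ w : ι → ℤ) ≤ m :=
      (supNorm_le_iff _ _).2 fun i => by simpa [Nat.lt_succ_iff] using hw i
    have := supNorm_le_supNorm_sub_add z ((↑) ∘ w)
    omega
  obtain ⟨w₁, hw₁, w₂, hw₂, hne, heq⟩ := Finset.exists_ne_map_eq_of_card_lt_of_maps_to hcard hmaps
  simp only [Fintype.mem_piFinset, Finset.mem_range, Nat.lt_succ_iff] at hw₁ hw₂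
  exact ⟨w₁, w₂, hw₁, hw₂, hne, heq⟩

lemma exists_local_period {M : Set (ι → ℤ)} {n m₀ m : ℕ} (hmn : m ≤ n)
    (hrec : ∀ x, m₀ ≤ supNorm x → IsRecurrentBlock M n (blockOf M x n))
    (hcount : recBlockCount M n < (m + 1) ^ Fintype.card ι) {z : ι → ℤ} (hz : m₀ + m ≤ supNorm z) :
    ∃ v : ι → ℤ, v ≠ 0 ∧ supNorm v ≤ m ∧
      blockOf M (z - v) (n - m) = blockOf M z (n - m) ∧
      blockOf M z (n - m) = blockOf M (z + v) (n - m) := by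
  obtain ⟨w₁, w₂, hw₁, hw₂, hne, heq⟩ := exists_ne_blockOf_sub_eq hrec hcount hz
  have hcut₁ : ∀ i, w₁ i + (n - m) ≤ n := fun i => by have := hw₁ i; omega
  have hcut₂ : ∀ i, w₂ i + (n - m) ≤ n := fun i => by have := hw₂ i; omega
  refine ⟨(↑) ∘ w₁ - (↑) ∘ w₂, sub_ne_zero.2 (Nat.cast_injective.comp_left.ne hne), ?_, ?_, ?_⟩
  · refine (supNorm_le_iff _ _).2 fun i => ?_
    have := hw₁ i
    have := hw₂ i
    simp only [Pi.sub_apply, Function.comp_apply]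
    omega
  · have hshift := blockOf_add_eq_of_blockOf_eq heq w₂ hcut₂
    rw [sub_add_cancel] at hshift
    rwa [← sub_add]
  · have hshift := blockOf_add_eq_of_blockOf_eq heq w₁ hcut₁
    rw [sub_add_cancel, sub_add_eq_add_sub] at hshift
    rwa [← add_sub_assoc]

end Blocks

theorem local_period_lemma_general (d : ℕ) (M : Set (Fin d → ℤ))
    (C : ℝ)
    (hR : ∀ n : ℕ, 1 ≤ n → (recBlockCount M n : ℝ) ≤ C * (n : ℝ) ^ (d - 1))
    (n : ℕ) :
    ∃ m₀ : ℕ, ∀ m : ℕ, m < n → 1 ≤ (m : ℝ) ^ d - C * (n : ℝ) ^ (d - 1) →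
      ∀ z : Fin d → ℤ, (m₀ + m : ℕ) ≤ supNorm z →
        ∃ v : Fin d → ℤ, v ≠ 0 ∧ supNorm v ≤ m ∧
          blockOf M (z - v) (n - m) = blockOf M z (n - m) ∧
          blockOf M z (n - m) = blockOf M (z + v) (n - m) := by
  obtain ⟨m₀, hrec⟩ := exists_forall_isRecurrentBlock_blockOf M n
  refine ⟨m₀, fun m hmn hm z hz => exists_local_period hmn.le hrec ?_ hz⟩
  have hlt : (recBlockCount M n : ℝ) < ((m ^ d : ℕ) : ℝ) := by
    push_cast
    linarith [hR n (by omega)]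
  calc recBlockCount M n < m ^ d := by exact_mod_cast hlt
    _ ≤ (m + 1) ^ Fintype.card (Fin d) := by
      rw [Fintype.card_fin]
      exact Nat.pow_le_pow_left m.le_succ d

/-- Lemma (Quas–Zamboni style): if `R_M(n) ≤ C·n^{d-1}` for all `n ≥ 1`, then for
each `n` there is `m₀` such that for every `m < n` with `m^d - C·n^{d-1} ≥ 1`
and every `z` with `‖z‖ ≥ m₀ + m` there is a nonzero `v` with `‖v‖ ≤ m` and
`M_{z-v,n-m} = M_{z,n-m} = M_{z+v,n-m}`. -/
theorem local_period_lemma (d : ℕ) (hd : 1 ≤ d) (M : Set (Fin d → ℤ))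
    (C : ℝ) (hC : 0 < C)
    (hR : ∀ n : ℕ, 1 ≤ n → (recBlockCount M n : ℝ) ≤ C * (n : ℝ) ^ (d - 1))
    (n : ℕ) :
    ∃ m₀ : ℕ, ∀ m : ℕ, m < n → 1 ≤ (m : ℝ) ^ d - C * (n : ℝ) ^ (d - 1) →
      ∀ z : Fin d → ℤ, (m₀ + m : ℕ) ≤ supNorm z →
        ∃ v : Fin d → ℤ, v ≠ 0 ∧ supNorm v ≤ m ∧
          blockOf M (z - v) (n - m) = blockOf M z (n - m) ∧
          blockOf M z (n - m) = blockOf M (z + v) (n - m) :=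
  local_period_lemma_general d M C hR n
end
end

section
/- Let M ⊆ ℤ², x ∈ ℤ², n ≥ 1 and v ∈ ℤ²∖{0} with ‖v‖ < n. Suppose M is v-periodic inside B(x,n) and M is not w-periodic inside B(x,n) for any nonzero w ∈ ℤ² with ‖w‖ < ‖v‖. Then the ‖v‖² blocks M_{x − n·𝟙 − z, 2n+‖v‖}, for z ranging over {0,…,‖v‖−1}², are pairwise distinct (where 𝟙 = (1,1)). -/
open Classical

noncomputable section

/- Two equal blocks at `p` and `q` say exactly that `M` is `(q - p)`-periodic on the window
of the block at `p`. The window of size `2n + ‖v‖` at `x - n·𝟙 - z` covers `B(x, n)` for every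
`z ∈ {0,…,‖v‖-1}²`, so two equal blocks with `z₁ ≠ z₂` make `z₁ - z₂` a nonzero period inside
`B(x, n)` of norm `< ‖v‖`, against the minimality of `v`. -/

section SupNorm

variable {ι : Type} [Fintype ι]

theorem natAbs_le_supNorm (y : ι → ℤ) (i : ι) : (y i).natAbs ≤ supNorm y :=
  Finset.le_sup (f := fun i => (y i).natAbs) (Finset.mem_univ i)

theorem supNorm_lt_iff {y : ι → ℤ} {K : ℕ} (hK : 0 < K) :
    supNorm y < K ↔ ∀ i, (y i).natAbs < K := by
  simp [supNorm, Finset.sup_lt_iff (show (⊥ : ℕ) < K from hK)]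

theorem natAbs_sub_lt_of_mem_ball {x m : ι → ℤ} {K : ℕ} (hm : m ∈ ball x K) (i : ι) :
    (x i - m i).natAbs < K :=
  (natAbs_le_supNorm (x - m) i).trans_lt hm

theorem supNorm_sub_lt_of_mem_cube [Nonempty ι] {a b : ι → ℤ} {s : ℕ}
    (ha : ∀ t, 0 ≤ a t ∧ a t < s) (hb : ∀ t, 0 ≤ b t ∧ b t < s) :
    supNorm (a - b) < s := by
  have hs : 0 < s := by
    obtain ⟨t⟩ := ‹Nonempty ι›
    have := ha t
    omega
  refine (supNorm_lt_iff hs).2 fun i => ?_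
  have := ha i
  have := hb i
  simp only [Pi.sub_apply]
  omega

end SupNorm

def window {ι : Type} (p : ι → ℤ) (N : ℕ) : Set (ι → ℤ) :=
  {m | ∀ i, p i ≤ m i ∧ m i < p i + N}

theorem vPeriodicInside_of_blockOf_eq {ι : Type} [Fintype ι] {M : Set (ι → ℤ)}
    {p q : ι → ℤ} {N : ℕ} (hpq : blockOf M p N = blockOf M q N) {X : Set (ι → ℤ)}
    (hX : X ⊆ window p N) :
    vPeriodicInside M (q - p) X := by
  intro m hm _
  let w : ι → Fin N := fun i => ⟨(m i - p i).toNat, by have := hX hm i; omega⟩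
  have hw : ∀ i, ((w i : ℕ) : ℤ) = m i - p i := fun i => by
    have := hX hm i
    simp only [w]
    omega
  have hp : (fun i => p i + ((w i : ℕ) : ℤ)) = m := by
    funext i
    rw [hw]
    ring
  have hq : (fun i => q i + ((w i : ℕ) : ℤ)) = m + (q - p) := by
    funext i
    simp only [hw, Pi.add_apply, Pi.sub_apply]
    ring
  have := congrFun hpq w
  simp only [blockOf, hp, hq] at this
  exact iff_of_eq this

theorem ball_subset_window {ι : Type} [Fintype ι] {x z : ι → ℤ} {n s : ℕ}
    (hz : ∀ t, 0 ≤ z t ∧ z t < s) :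
    ball x n ⊆ window (x - n • (1 : ι → ℤ) - z) (2 * n + s) := by
  intro m hm i
  have := natAbs_sub_lt_of_mem_ball hm i
  have := hz i
  simp only [Pi.sub_apply, nsmul_eq_mul, mul_one, Pi.natCast_apply]
  push_cast
  omega

theorem distinct_blocks_of_minimal_period_general (M : Set (Fin 2 → ℤ))
    (x : Fin 2 → ℤ) (n : ℕ)
    (v : Fin 2 → ℤ)
    (hmin : ∀ w : Fin 2 → ℤ, w ≠ 0 → supNorm w < supNorm v →
      ¬ vPeriodicInside M w (ball x n)) :
    ∀ z₁ z₂ : Fin 2 → ℤ,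
      (∀ t, 0 ≤ z₁ t ∧ z₁ t < (supNorm v : ℤ)) →
      (∀ t, 0 ≤ z₂ t ∧ z₂ t < (supNorm v : ℤ)) →
      blockOf M (x - n • (1 : Fin 2 → ℤ) - z₁) (2 * n + supNorm v) =
        blockOf M (x - n • (1 : Fin 2 → ℤ) - z₂) (2 * n + supNorm v) →
      z₁ = z₂ := by
  intro z₁ z₂ h₁ h₂ hblock
  by_contra hne
  refine hmin (z₁ - z₂) (sub_ne_zero.mpr hne) (supNorm_sub_lt_of_mem_cube h₁ h₂) ?_
  have hdiff : (x - n • (1 : Fin 2 → ℤ) - z₂) - (x - n • (1 : Fin 2 → ℤ) - z₁) = z₁ - z₂ := by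
    abel
  rw [← hdiff]
  exact vPeriodicInside_of_blockOf_eq hblock (ball_subset_window h₁)

/-- Lemma: if `M ⊆ ℤ²` is `v`-periodic inside `B(x,n)` with `‖v‖ < n` and `v` is a
minimal-norm local period there, then the `‖v‖²` blocks
`M_{x - n·𝟙 - z, 2n + ‖v‖}`, `z ∈ {0,…,‖v‖-1}²`, are pairwise distinct. -/
theorem distinct_blocks_of_minimal_period (M : Set (Fin 2 → ℤ))
    (x : Fin 2 → ℤ) (n : ℕ) (hn : 1 ≤ n)
    (v : Fin 2 → ℤ) (hv : v ≠ 0) (hvn : supNorm v < n)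
    (hper : vPeriodicInside M v (ball x n))
    (hmin : ∀ w : Fin 2 → ℤ, w ≠ 0 → supNorm w < supNorm v →
      ¬ vPeriodicInside M w (ball x n)) :
    ∀ z₁ z₂ : Fin 2 → ℤ,
      (∀ t, 0 ≤ z₁ t ∧ z₁ t < (supNorm v : ℤ)) →
      (∀ t, 0 ≤ z₂ t ∧ z₂ t < (supNorm v : ℤ)) →
      blockOf M (x - n • (1 : Fin 2 → ℤ) - z₁) (2 * n + supNorm v) =
        blockOf M (x - n • (1 : Fin 2 → ℤ) - z₂) (2 * n + supNorm v) →
      z₁ = z₂ :=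
  distinct_blocks_of_minimal_period_general M x n v hmin
end
end

section
/- Let M ⊆ ℤ² be the set M = {(k,k) : k ∈ ℕ} ∪ {(k,1) : k ∈ ℕ} (the nonnegative diagonal together with the nonnegative horizontal line at height 1). Then for all sufficiently large n, the n² blocks M_{(i,j),n} with i, j ∈ {−n+1, …, 0} are pairwise distinct; in particular p_M(n) ≥ n² for all sufficiently large n. -/
open Classical

noncomputable section

/-- The set of Example 1: the nonnegative diagonal together with the
nonnegative horizontal line at height `1`. -/
def diagLineSet : Set (Fin 2 → ℤ) :=
  {x | (∃ k : ℕ, x 0 = (k : ℤ) ∧ x 1 = (k : ℤ)) ∨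
       (∃ k : ℕ, x 0 = (k : ℤ) ∧ x 1 = 1)}

/-
Take `y` in the box `{-n+1,…,0}^ι` and read the block at `y` at the cell `w = -y`: it
records whether the origin lies in `M`. The same cell of the block at `y'` records whether
`y' - y` lies in `M`. So if `0 ∈ M`, equal blocks at `y` and `y'` put both `y' - y` and
`y - y'` in `M`; for the diagonal-plus-line set this forces `y = y'`, because `M ∩ -M = {0}`.
Hence the `n ^ 2` points of the box have pairwise distinct blocks.
-/

section Blocks

variable {ι : Type} [Fintype ι] {M : Set (ι → ℤ)} {n : ℕ}

def negBox (ι : Type) (n : ℕ) : Set (ι → ℤ) :=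
  {x | ∀ i, -(n : ℤ) + 1 ≤ x i ∧ x i ≤ 0}

theorem sub_mem_of_blockOf_eq {x y : ι → ℤ} (hx : x ∈ negBox ι n) (h0 : 0 ∈ M)
    (h : blockOf M x n = blockOf M y n) : y - x ∈ M := by
  let w : ι → Fin n := fun i => ⟨(-x i).toNat, by have := hx i; omega⟩
  have hw : ∀ i, ((w i : ℕ) : ℤ) = -x i := fun i => by have := hx i; simp only [w]; omega
  have hshift : ∀ z, blockOf M z n w ↔ z - x ∈ M := fun z => by
    have hz : (fun i => z i + ((w i : ℕ) : ℤ)) = z - x :=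
      funext fun i => by simp only [hw, Pi.sub_apply, sub_eq_add_neg]
    exact Iff.of_eq (congrArg (· ∈ M) hz)
  exact (hshift y).1 (h ▸ (hshift x).2 (by rwa [sub_self]))

theorem injOn_blockOf_negBox (h0 : 0 ∈ M) (hM : ∀ d, d ∈ M → -d ∈ M → d = 0) :
    Set.InjOn (fun x => blockOf M x n) (negBox ι n) := by
  intro x hx y hy h
  have hyx := sub_mem_of_blockOf_eq hx h0 h
  have hxy := sub_mem_of_blockOf_eq hy h0 h.symm
  rw [← neg_sub] at hxy
  exact (sub_eq_zero.mp (hM _ hyx hxy)).symm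

theorem pow_card_le_blockCount (h0 : 0 ∈ M) (hM : ∀ d, d ∈ M → -d ∈ M → d = 0) :
    n ^ Fintype.card ι ≤ blockCount M n := by
  let e : (ι → Fin n) → ι → ℤ := fun w i => -(w i : ℤ)
  have he : Function.Injective e := fun v w h =>
    funext fun i => Fin.ext (by simpa [e] using congrFun h i)
  have hbox : Set.MapsTo e Set.univ (negBox ι n) := fun w _ i => by
    have := (w i).isLt; simp only [e]; omega
  have hinj : Function.Injective fun w => blockOf M (e w) n := fun v w h =>
    he (injOn_blockOf_negBox h0 hM (hbox trivial) (hbox trivial) h)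
  calc n ^ Fintype.card ι = Nat.card (Set.range fun w => blockOf M (e w) n) := by
        rw [Nat.card_range_of_injective hinj]; simp
    _ ≤ blockCount M n := by
        rw [Nat.card_coe_set_eq]
        exact Set.ncard_le_ncard (by rintro _ ⟨w, rfl⟩; exact ⟨_, rfl⟩) (Set.toFinite _)

end Blocks

theorem zero_mem_diagLineSet : (0 : Fin 2 → ℤ) ∈ diagLineSet :=
  Or.inl ⟨0, rfl, rfl⟩

theorem eq_zero_of_mem_diagLineSet_of_neg_mem {d : Fin 2 → ℤ} (hd : d ∈ diagLineSet)
    (hd' : -d ∈ diagLineSet) : d = 0 := by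
  simp only [diagLineSet, Set.mem_ofPred_eq, Pi.neg_apply] at hd hd'
  have h : d 0 = 0 ∧ d 1 = 0 := by
    obtain ⟨k, hk0, hk1⟩ | ⟨k, hk0, hk1⟩ := hd <;>
      obtain ⟨m, hm0, hm1⟩ | ⟨m, hm0, hm1⟩ := hd' <;> omega
  funext i
  fin_cases i
  exacts [h.1, h.2]

/-- For all sufficiently large `n`, the `n²` blocks `M_{(i,j),n}` with
`i,j ∈ {-n+1,…,0}` are pairwise distinct; in particular `p_M(n) ≥ n²`. -/
theorem diagLine_blockCount_ge : ∃ N : ℕ, ∀ n : ℕ, N ≤ n →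
    (∀ y₁ y₂ : Fin 2 → ℤ,
      (∀ t, -(n : ℤ) + 1 ≤ y₁ t ∧ y₁ t ≤ 0) →
      (∀ t, -(n : ℤ) + 1 ≤ y₂ t ∧ y₂ t ≤ 0) →
      blockOf diagLineSet y₁ n = blockOf diagLineSet y₂ n → y₁ = y₂) ∧
    n ^ 2 ≤ blockCount diagLineSet n := by
  refine ⟨0, fun n _ => ⟨fun y₁ y₂ h₁ h₂ h => ?_, ?_⟩⟩
  · exact injOn_blockOf_negBox zero_mem_diagLineSet
      (fun _ => eq_zero_of_mem_diagLineSet_of_neg_mem) h₁ h₂ h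
  · simpa using pow_card_le_blockCount (n := n) zero_mem_diagLineSet
      (fun _ => eq_zero_of_mem_diagLineSet_of_neg_mem)
end
end
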